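/- If (x₁,y₁) and (x₂,y₂) both lie in the open square (0, log 2) × (0, log 2) and the gradients of f₂ agree at these two points, i.e. (∂f₂/∂x, ∂f₂/∂y)(x₁,y₁) = (∂f₂/∂x, ∂f₂/∂y)(x₂,y₂), then (x₁,y₁) = (x₂,y₂). -/

import Mathlib

noncomputable def binEnt (p : ℝ) : ℝ := -p * Real.log p - (1 - p) * Real.log (1 - p)

noncomputable def binEntInv (x : ℝ) : ℝ :=
  sInf {p : ℝ | p ∈ Set.Icc (0 : ℝ) (1 / 2) ∧ binEnt p = x}

noncomputable def starOp (p q : ℝ) : ℝ := p * (1 - q) + q * (1 - p)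

noncomputable def f₂ (x y : ℝ) : ℝ := binEnt (starOp (binEntInv x) (binEntInv y))

/-- Shannon entropy (natural log) of a discrete random variable `X` on `(Ω, μ)`. -/
noncomputable def entropy {Ω S : Type*} [MeasurableSpace Ω] (μ : MeasureTheory.Measure Ω)
    (X : Ω → S) : ℝ :=
  ∑' s : S, Real.negMulLog ((μ (X ⁻¹' {s})).toReal)

/-- Conditional Shannon entropy `H(X | U) = H(X, U) - H(U)`. -/
noncomputable def condEntropy {Ω S T : Type*} [MeasurableSpace Ω] (μ : MeasureTheory.Measure Ω)
    (X : Ω → S) (U : Ω → T) : ℝ :=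
  entropy μ (fun ω => (X ω, U ω)) - entropy μ U

/-- Independence of two discrete random variables. -/
def IndepRV {Ω S T : Type*} [MeasurableSpace Ω] (μ : MeasureTheory.Measure Ω)
    (X : Ω → S) (Y : Ω → T) : Prop :=
  ∀ (a : S) (b : T), μ (X ⁻¹' {a} ∩ Y ⁻¹' {b}) = μ (X ⁻¹' {a}) * μ (Y ⁻¹' {b})

/-- Mutual independence of a finite family of discrete random variables. -/
def iIndepRV {Ω G ι : Type*} [Fintype ι] [MeasurableSpace Ω] (μ : MeasureTheory.Measure Ω)
    (X : ι → Ω → G) : Prop :=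
  ∀ a : ι → G, μ (⋂ i, X i ⁻¹' {a i}) = ∏ i, μ (X i ⁻¹' {a i})

/-- `fG G x y` : the minimum entropy `H(X+Y)` over independent `G`-valued random variables
`X, Y` with `H(X) = x` and `H(Y) = y`. -/
noncomputable def fG (G : Type) [AddCommGroup G] (x y : ℝ) : ℝ :=
  sInf { z : ℝ | ∃ (Ω : Type) (_ : MeasurableSpace Ω) (μ : MeasureTheory.Measure Ω),
    MeasureTheory.IsProbabilityMeasure μ ∧ ∃ X Y : Ω → G, IndepRV μ X Y ∧
      entropy μ X = x ∧ entropy μ Y = y ∧ entropy μ (fun ω => X ω + Y ω) = z }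

/-- `fGk G k x` : the minimum entropy `H(X₁ + ⋯ + X_k)` over `k` mutually independent
`G`-valued random variables with `H(Xᵢ) = xᵢ`. -/
noncomputable def fGk (G : Type) [AddCommGroup G] (k : ℕ) (x : Fin k → ℝ) : ℝ :=
  sInf { z : ℝ | ∃ (Ω : Type) (_ : MeasurableSpace Ω) (μ : MeasureTheory.Measure Ω),
    MeasureTheory.IsProbabilityMeasure μ ∧ ∃ X : Fin k → Ω → G, iIndepRV μ X ∧
      (∀ i, entropy μ (X i) = x i) ∧ entropy μ (fun ω => ∑ i, X i ω) = z }

/-- Iterated application `fG G x₁ (fG G x₂ (… (fG G x_{r-1} x_r)…))`. -/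
noncomputable def iterFG (G : Type) [AddCommGroup G] : List ℝ → ℝ
  | [] => 0
  | [a] => a
  | a :: b :: rest => fG G a (iterFG G (b :: rest))

/-!
Write `u = 1 - 2 h⁻¹(x)` and `v = 1 - 2 h⁻¹(y)`. Then `1 - 2 (h⁻¹(x) ⋆ h⁻¹(y)) = u v`, and since
`h'(p) = 2 artanh (1 - 2 p)`, the gradient of `f₂` is `(Φ (u v) / Φ u, Φ (u v) / Φ v)` with
`Φ t = t artanh t`. Two points with `u₁ < u₂` and the same gradient satisfy
`Φ u₂ / Φ u₁ = Φ v₂ / Φ v₁`: they lie on one level curve `Φ v = κ Φ u`. Along such a curve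
`Φ (u v) / Φ u` strictly increases, because its derivative has the sign of
`P u + P v - P (u v)` for `P = Φ / (t Φ') = R / (1 + R)`, and `R t = (1 - t²) artanh t / t`
satisfies `R (u v) < R u + R v`: the function `w ↦ R w - R (u w)` decreases on `[v, 1]`
(as `(1 + t²) artanh t / t` increases, artanh being convex) and equals `- R u` at `w = 1`.
-/

open Real Set

theorem mul_mem_Ioo_zero_one {u v : ℝ} (hu : u ∈ Ioo (0 : ℝ) 1) (hv : v ∈ Ioo (0 : ℝ) 1) :
    u * v ∈ Ioo (0 : ℝ) 1 :=
  ⟨mul_pos hu.1 hv.1, mul_lt_one_of_nonneg_of_lt_one_left hu.1.le hu.2 hv.2.le⟩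

noncomputable def invOn (f : ℝ → ℝ) (a b y : ℝ) : ℝ := sInf {x : ℝ | x ∈ Icc a b ∧ f x = y}

section invOn

variable {f : ℝ → ℝ} {a b : ℝ}

theorem invOn_apply (hf : StrictMonoOn f (Icc a b)) {x : ℝ} (hx : x ∈ Icc a b) :
    invOn f a b (f x) = x := by
  have hset : {x' : ℝ | x' ∈ Icc a b ∧ f x' = f x} = {x} :=
    eq_singleton_iff_unique_mem.2 ⟨⟨hx, rfl⟩, fun x' hx' => hf.injOn hx'.1 hx hx'.2⟩
  rw [invOn, hset, csInf_singleton]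

theorem invOn_mem_and_apply (hab : a ≤ b) (hf : StrictMonoOn f (Icc a b))
    (hc : ContinuousOn f (Icc a b)) {y : ℝ} (hy : y ∈ Icc (f a) (f b)) :
    invOn f a b y ∈ Icc a b ∧ f (invOn f a b y) = y := by
  obtain ⟨x, hx, rfl⟩ := intermediate_value_Icc hab hc hy
  rw [invOn_apply hf hx]
  exact ⟨hx, rfl⟩

theorem invOn_mem_Ioo (hab : a ≤ b) (hf : StrictMonoOn f (Icc a b))
    (hc : ContinuousOn f (Icc a b)) {y : ℝ} (hy : y ∈ Ioo (f a) (f b)) :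
    invOn f a b y ∈ Ioo a b := by
  obtain ⟨hmem, hfy⟩ := invOn_mem_and_apply hab hf hc (Ioo_subset_Icc_self hy)
  refine ⟨hmem.1.lt_of_ne ?_, hmem.2.lt_of_ne ?_⟩ <;> rintro h
  · exact hy.1.ne (h ▸ hfy)
  · exact hy.2.ne' (h ▸ hfy)

theorem continuousAt_invOn (hab : a ≤ b) (hf : StrictMonoOn f (Icc a b))
    (hc : ContinuousOn f (Icc a b)) {y : ℝ} (hy : y ∈ Ioo (f a) (f b)) :
    ContinuousAt (invOn f a b) y := by
  have hspec := fun z (hz : z ∈ Icc (f a) (f b)) => invOn_mem_and_apply hab hf hc hz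
  have hmono : MonotoneOn (invOn f a b) (Icc (f a) (f b)) := fun z hz z' hz' hzz' =>
    (hf.le_iff_le (hspec z hz).1 (hspec z' hz').1).1 <| by
      rw [(hspec z hz).2, (hspec z' hz').2]
      exact hzz'
  have himage : Icc a b ⊆ invOn f a b '' Icc (f a) (f b) := fun x hx =>
    ⟨f x, ⟨hf.monotoneOn (left_mem_Icc.2 hab) hx hx.1,
      hf.monotoneOn hx (right_mem_Icc.2 hab) hx.2⟩, invOn_apply hf hx⟩
  have hxy := invOn_mem_Ioo hab hf hc hy
  exact continuousAt_of_monotoneOn_of_image_mem_nhds hmono (Icc_mem_nhds hy.1 hy.2)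
    (Filter.mem_of_superset (Icc_mem_nhds hxy.1 hxy.2) himage)

theorem hasDerivAt_invOn (hab : a ≤ b) (hf : StrictMonoOn f (Icc a b))
    (hc : ContinuousOn f (Icc a b)) {y f' : ℝ} (hy : y ∈ Ioo (f a) (f b))
    (hder : HasDerivAt f f' (invOn f a b y)) (hf' : f' ≠ 0) :
    HasDerivAt (invOn f a b) f'⁻¹ y :=
  hder.of_local_left_inverse (continuousAt_invOn hab hf hc hy) hf' <|
    Filter.mem_of_superset (Ioo_mem_nhds hy.1 hy.2) fun _ hz =>
      (invOn_mem_and_apply hab hf hc (Ioo_subset_Icc_self hz)).2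

end invOn

theorem hasDerivAt_artanh {x : ℝ} (hx : x ∈ Ioo (-1 : ℝ) 1) :
    HasDerivAt artanh (1 - x ^ 2)⁻¹ x := by
  obtain ⟨h₁, h₂⟩ := hx
  have h₁' : 1 + x ≠ 0 := by linarith
  have h₂' : 1 - x ≠ 0 := by linarith
  have h₃ : 1 - x ^ 2 ≠ 0 := by nlinarith
  have hq : HasDerivAt (fun y => (1 + y) / (1 - y)) (2 / (1 - x) ^ 2) x :=
    (((hasDerivAt_id' x).const_add 1).div ((hasDerivAt_id' x).const_sub 1)
      h₂').congr_deriv (by ring)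
  have hlog : HasDerivAt (fun y => 1 / 2 * log ((1 + y) / (1 - y))) (1 - x ^ 2)⁻¹ x :=
    ((hq.log (div_pos (by linarith) (by linarith)).ne').const_mul (1 / 2)).congr_deriv (by
      field_simp
      ring)
  refine hlog.congr_of_eventuallyEq ?_
  filter_upwards [Ioo_mem_nhds h₁ h₂] with y hy using artanh_eq_half_log (Ioo_subset_Icc_self hy)

theorem strictConvexOn_artanh : StrictConvexOn ℝ (Ico 0 1) artanh := by
  refine StrictMonoOn.strictConvexOn_of_deriv (convex_Ico 0 1)
    (fun x hx => (hasDerivAt_artanh ⟨by linarith [hx.1], hx.2⟩).continuousAt.continuousWithinAt)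
    ?_
  rw [interior_Ico]
  intro s hs t ht hst
  rw [(hasDerivAt_artanh ⟨by linarith [hs.1], hs.2⟩).deriv,
    (hasDerivAt_artanh ⟨by linarith [ht.1], ht.2⟩).deriv]
  gcongr
  · nlinarith [ht.2, ht.1]
  · exact hs.1.le

theorem artanh_div_lt_artanh_div {s t : ℝ} (hs : 0 < s) (hst : s < t) (ht : t < 1) :
    artanh s / s < artanh t / t := by
  simpa [artanh_zero] using strictConvexOn_artanh.secant_strict_mono (a := 0) ⟨le_rfl, one_pos⟩
    ⟨hs.le, hst.trans ht⟩ ⟨(hs.trans hst).le, ht⟩ hs.ne' (hs.trans hst).ne' hst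

noncomputable def artanhRatio (t : ℝ) : ℝ := (1 - t ^ 2) * artanh t / t

theorem artanhRatio_pos {t : ℝ} (h₀ : 0 < t) (h₁ : t < 1) : 0 < artanhRatio t :=
  div_pos (mul_pos (by nlinarith) (artanh_pos ⟨h₀, h₁⟩)) h₀

theorem artanhRatio_one : artanhRatio 1 = 0 := by simp [artanhRatio]

theorem hasDerivAt_artanhRatio {t : ℝ} (h₀ : 0 < t) (h₁ : t < 1) :
    HasDerivAt artanhRatio ((1 - (1 + t ^ 2) * (artanh t / t)) / t) t := by
  have h₂ : 1 - t ^ 2 ≠ 0 := by nlinarith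
  have hnum : HasDerivAt (fun x => (1 - x ^ 2) * artanh x)
      (-(2 * t) * artanh t + (1 - t ^ 2) * (1 - t ^ 2)⁻¹) t := by
    have hsq : HasDerivAt (fun x => 1 - x ^ 2) (-(2 * t)) t := by
      simpa using (hasDerivAt_pow 2 t).const_sub 1
    exact hsq.mul (hasDerivAt_artanh ⟨by linarith, h₁⟩)
  exact (hnum.div (hasDerivAt_id' t) h₀.ne').congr_deriv (by
    field_simp
    ring)

theorem continuousOn_artanhRatio : ContinuousOn artanhRatio (Ioc 0 1) := by
  have hcont : ContinuousOn
      (fun t => (1 + t) * ((1 - t) * log (1 + t) - (1 - t) * log (1 - t)) / (2 * t)) (Ioc 0 1) := by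
    refine ContinuousOn.div ?_ (by fun_prop) fun t ht => by linarith [ht.1]
    refine ContinuousOn.mul (by fun_prop) (ContinuousOn.sub ?_ ?_)
    · exact (continuousOn_const.sub continuousOn_id).mul
        (continuousOn_log.comp (by fun_prop) fun t ht => by simp; linarith [ht.1])
    · exact (continuous_mul_log.comp (continuous_const.sub continuous_id)).continuousOn
  refine hcont.congr fun t ht => ?_
  rcases ht.2.lt_or_eq with h | rfl
  · rw [artanhRatio, artanh_eq_half_log ⟨by linarith [ht.1], ht.2⟩,
      log_div (by linarith [ht.1]) (by linarith)]
    field_simp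
    ring
  · simp [artanhRatio]

theorem artanhRatio_mul_lt_add {u v : ℝ} (hu₀ : 0 < u) (hu₁ : u < 1) (hv₀ : 0 < v) (hv₁ : v < 1) :
    artanhRatio (u * v) < artanhRatio u + artanhRatio v := by
  suffices StrictAntiOn (fun w => artanhRatio w - artanhRatio (u * w)) (Icc v 1) by
    have := this (left_mem_Icc.2 hv₁.le) (right_mem_Icc.2 hv₁.le) hv₁
    simp only [mul_one, artanhRatio_one] at this
    linarith
  refine strictAntiOn_of_deriv_neg (convex_Icc v 1) ?_ fun w hw => ?_
  · refine continuousOn_artanhRatio.mono (Icc_subset_Ioc_iff hv₁.le |>.2 ⟨hv₀, le_rfl⟩) |>.sub ?_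
    refine continuousOn_artanhRatio.comp (continuous_const_mul u).continuousOn fun w hw => ?_
    exact ⟨mul_pos hu₀ (hv₀.trans_le hw.1), by nlinarith [hw.2, hw.1]⟩
  rw [interior_Icc] at hw
  have hw₀ : 0 < w := hv₀.trans hw.1
  have huw₀ : 0 < u * w := mul_pos hu₀ hw₀
  have huw : u * w < w := by nlinarith [hw.2]
  have hd : HasDerivAt (fun w => artanhRatio w - artanhRatio (u * w))
      ((1 - (1 + w ^ 2) * (artanh w / w)) / w
        - (1 - (1 + (u * w) ^ 2) * (artanh (u * w) / (u * w))) / (u * w) * (u * 1)) w :=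
    (hasDerivAt_artanhRatio hw₀ hw.2).sub
    ((hasDerivAt_artanhRatio huw₀ (huw.trans hw.2)).comp w ((hasDerivAt_id' w).const_mul u))
  rw [hd.deriv]
  -- `t * artanhRatio' t = 1 - (1 + t²) artanh t / t`, and the last term increases with `t`
  have hmono : (1 + (u * w) ^ 2) * (artanh (u * w) / (u * w)) < (1 + w ^ 2) * (artanh w / w) := by
    have := artanh_div_lt_artanh_div huw₀ huw hw.2
    have := div_pos (artanh_pos ⟨huw₀, huw.trans hw.2⟩) huw₀
    gcongr
  have hderiv : (1 - (1 + w ^ 2) * (artanh w / w)) / w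
      - (1 - (1 + (u * w) ^ 2) * (artanh (u * w) / (u * w))) / (u * w) * (u * 1)
      = ((1 + (u * w) ^ 2) * (artanh (u * w) / (u * w)) - (1 + w ^ 2) * (artanh w / w)) / w := by
    field_simp
    ring
  rw [hderiv]
  exact div_neg_of_neg_of_pos (by linarith) hw₀

section LevelCurve

variable {F F' : ℝ → ℝ}

theorem strictMonoOn_Ioo_of_hasDerivAt_pos {a b : ℝ} (hF : ∀ t ∈ Ioo a b, HasDerivAt F (F' t) t)
    (hF' : ∀ t ∈ Ioo a b, 0 < F' t) : StrictMonoOn F (Ioo a b) :=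
  strictMonoOn_of_hasDerivWithinAt_pos (convex_Ioo a b)
    (fun t ht => (hF t ht).continuousAt.continuousWithinAt)
    (fun t ht => (hF t (interior_subset ht)).hasDerivWithinAt)
    (fun t ht => hF' t (interior_subset ht))

theorem exists_level_curve (hF : ∀ t ∈ Ioo (0 : ℝ) 1, HasDerivAt F (F' t) t)
    (hF_pos : ∀ t ∈ Ioo (0 : ℝ) 1, 0 < F t) (hF' : ∀ t ∈ Ioo (0 : ℝ) 1, 0 < F' t)
    {u u' v v' : ℝ} (hu : 0 < u) (huu' : u < u') (hu' : u' < 1) (hv : 0 < v) (hvv' : v < v')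
    (hv' : v' < 1) (hlevel : F u * F v' = F u' * F v) :
    ∃ β : ℝ → ℝ, β u = v ∧ β u' = v' ∧ ∀ t ∈ Icc u u', β t ∈ Ioo 0 1 ∧
      HasDerivAt β (F (β t) * F' t / (F t * F' (β t))) t := by
  have hmono := strictMonoOn_Ioo_of_hasDerivAt_pos hF hF'
  have hIcc : ∀ {c d : ℝ}, 0 < c → d < 1 → Icc c d ⊆ Ioo 0 1 := fun hc hd s hs =>
    ⟨hc.trans_le hs.1, hs.2.trans_lt hd⟩
  -- invert `F` on an interval around `[v, v']`, so that `β` stays off its endpoints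
  obtain ⟨c, hc, hcv⟩ := exists_between hv
  obtain ⟨d, hv'd, hd⟩ := exists_between hv'
  have hcd : Icc c d ⊆ Ioo 0 1 := hIcc hc hd
  have hc_le_d : c ≤ d := by linarith
  have hmono' : StrictMonoOn F (Icc c d) := hmono.mono hcd
  have hcont : ContinuousOn F (Icc c d) := fun s hs =>
    (hF s (hcd hs)).continuousAt.continuousWithinAt
  set κ := F v / F u
  have hFu := hF_pos u ⟨hu, huu'.trans hu'⟩
  have hκ : 0 < κ := div_pos (hF_pos v ⟨hv, hvv'.trans hv'⟩) hFu
  have hκu : κ * F u = F v := div_mul_cancel₀ _ hFu.ne'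
  have hκu' : κ * F u' = F v' := by
    rw [div_mul_eq_mul_div, div_eq_iff hFu.ne']
    linarith
  have hrange : ∀ t ∈ Icc u u', κ * F t ∈ Ioo (F c) (F d) := fun t ht => by
    have hFc : F c < κ * F u := hκu ▸ hmono (hcd ⟨le_rfl, hc_le_d⟩) ⟨hv, hvv'.trans hv'⟩ hcv
    have hFd : κ * F u' < F d := hκu' ▸ hmono ⟨hv.trans hvv', hv'⟩ (hcd ⟨hc_le_d, le_rfl⟩) hv'd
    have hu_mem := hIcc hu hu' (left_mem_Icc.2 huu'.le)
    have hu'_mem := hIcc hu hu' (right_mem_Icc.2 huu'.le)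
    exact ⟨hFc.trans_le <| mul_le_mul_of_nonneg_left
        (hmono.monotoneOn hu_mem (hIcc hu hu' ht) ht.1) hκ.le,
      (mul_le_mul_of_nonneg_left (hmono.monotoneOn (hIcc hu hu' ht) hu'_mem ht.2) hκ.le).trans_lt
        hFd⟩
  refine ⟨fun t => invOn F c d (κ * F t), ?_, ?_, fun t ht => ?_⟩
  · dsimp only; rw [hκu]; exact invOn_apply hmono' ⟨hcv.le, by linarith⟩
  · dsimp only; rw [hκu']; exact invOn_apply hmono' ⟨by linarith, hv'd.le⟩
  have hβ := hcd (Ioo_subset_Icc_self (invOn_mem_Ioo hc_le_d hmono' hcont (hrange t ht)))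
  have hFβ := (invOn_mem_and_apply hc_le_d hmono' hcont (Ioo_subset_Icc_self (hrange t ht))).2
  have ht₀₁ := hIcc hu hu' ht
  refine ⟨hβ, ?_⟩
  refine ((hasDerivAt_invOn hc_le_d hmono' hcont (hrange t ht) (hF _ hβ) (hF' _ hβ).ne').comp t
    ((hF t ht₀₁).const_mul κ)).congr_deriv ?_
  simp only [hFβ]
  field_simp [(hF_pos t ht₀₁).ne']

theorem div_lt_div_of_level (hF : ∀ t ∈ Ioo (0 : ℝ) 1, HasDerivAt F (F' t) t)
    (hF_pos : ∀ t ∈ Ioo (0 : ℝ) 1, 0 < F t) (hF' : ∀ t ∈ Ioo (0 : ℝ) 1, 0 < F' t)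
    (hsub : ∀ u ∈ Ioo (0 : ℝ) 1, ∀ v ∈ Ioo (0 : ℝ) 1,
      F (u * v) / (u * v * F' (u * v)) < F u / (u * F' u) + F v / (v * F' v))
    {u u' v v' : ℝ} (hu : 0 < u) (huu' : u < u') (hu' : u' < 1) (hv : 0 < v) (hvv' : v < v')
    (hv' : v' < 1) (hlevel : F u * F v' = F u' * F v) :
    F (u * v) / F u < F (u' * v') / F u' := by
  obtain ⟨β, hβu, hβu', hβ⟩ := exists_level_curve hF hF_pos hF' hu huu' hu' hv hvv' hv' hlevel
  have hmem : ∀ t ∈ Icc u u', t ∈ Ioo (0 : ℝ) 1 := fun t ht =>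
    ⟨hu.trans_le ht.1, ht.2.trans_lt hu'⟩
  have hprod : ∀ t ∈ Icc u u', t * β t ∈ Ioo (0 : ℝ) 1 := fun t ht =>
    mul_mem_Ioo_zero_one (hmem t ht) (hβ t ht).1
  set P : ℝ → ℝ := fun s => F s / (s * F' s) with hP_def
  have hP : ∀ s ∈ Ioo (0 : ℝ) 1, 0 < P s := fun s hs =>
    div_pos (hF_pos s hs) (mul_pos hs.1 (hF' s hs))
  have hg : ∀ t ∈ Icc u u', HasDerivAt (fun s => F (s * β s) / F s)
      (F (t * β t) * F' t / (F t ^ 2 * P (t * β t)) * (P t + P (β t) - P (t * β t))) t := by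
    intro t ht
    have := (hmem t ht).1
    have := (hβ t ht).1.1
    have := hF_pos t (hmem t ht)
    have := hF' t (hmem t ht)
    have := hF_pos _ (hβ t ht).1
    have := hF' _ (hβ t ht).1
    have := hF_pos _ (hprod t ht)
    have := hF' _ (hprod t ht)
    refine (((hF _ (hprod t ht)).comp t ((hasDerivAt_id' t).mul (hβ t ht).2)).div
      (hF t (hmem t ht)) (hF_pos t (hmem t ht)).ne').congr_deriv ?_
    simp only [hP_def, Function.comp_apply, Pi.mul_apply]
    field_simp
  have hmono : StrictMonoOn (fun s => F (s * β s) / F s) (Icc u u') := by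
    refine strictMonoOn_of_deriv_pos (convex_Icc u u')
      (fun t ht => (hg t ht).continuousAt.continuousWithinAt) fun t ht => ?_
    have ht' := Ioo_subset_Icc_self (interior_Icc.subset ht)
    rw [(hg t ht').deriv]
    refine mul_pos (div_pos (mul_pos (hF_pos _ (hprod t ht')) (hF' t (hmem t ht')))
      (mul_pos (pow_pos (hF_pos t (hmem t ht')) 2) (hP _ (hprod t ht')))) ?_
    linarith [hsub t (hmem t ht') (β t) (hβ t ht').1]
  simpa [hβu, hβu'] using hmono (left_mem_Icc.2 huu'.le) (right_mem_Icc.2 huu'.le) huu'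

theorem eq_and_eq_of_div_eq_div (hF : ∀ t ∈ Ioo (0 : ℝ) 1, HasDerivAt F (F' t) t)
    (hF_pos : ∀ t ∈ Ioo (0 : ℝ) 1, 0 < F t) (hF' : ∀ t ∈ Ioo (0 : ℝ) 1, 0 < F' t)
    (hsub : ∀ u ∈ Ioo (0 : ℝ) 1, ∀ v ∈ Ioo (0 : ℝ) 1,
      F (u * v) / (u * v * F' (u * v)) < F u / (u * F' u) + F v / (v * F' v))
    {u₁ v₁ u₂ v₂ : ℝ} (hu₁ : u₁ ∈ Ioo (0 : ℝ) 1) (hv₁ : v₁ ∈ Ioo (0 : ℝ) 1)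
    (hu₂ : u₂ ∈ Ioo (0 : ℝ) 1) (hv₂ : v₂ ∈ Ioo (0 : ℝ) 1)
    (h₁ : F (u₁ * v₁) / F u₁ = F (u₂ * v₂) / F u₂) (h₂ : F (u₁ * v₁) / F v₁ = F (u₂ * v₂) / F v₂) :
    u₁ = u₂ ∧ v₁ = v₂ := by
  wlog hu : u₁ ≤ u₂ generalizing u₁ v₁ u₂ v₂
  · obtain ⟨h, h'⟩ := this hu₂ hv₂ hu₁ hv₁ h₁.symm h₂.symm (le_of_not_ge hu)
    exact ⟨h.symm, h'.symm⟩
  have hmono := strictMonoOn_Ioo_of_hasDerivAt_pos hF hF'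
  rcases hu.lt_or_eq with hlt | rfl
  · have hc₁ := hF_pos _ (mul_mem_Ioo_zero_one hu₁ hv₁)
    have hc₂ := hF_pos _ (mul_mem_Ioo_zero_one hu₂ hv₂)
    have hu₁₂ := hF_pos _ hu₁
    have hv₁₂ := hF_pos _ hv₁
    have h₁' := (div_eq_div_iff hu₁₂.ne' (hF_pos _ hu₂).ne').1 h₁
    have h₂' := (div_eq_div_iff hv₁₂.ne' (hF_pos _ hv₂).ne').1 h₂
    have hlevel : F u₁ * F v₂ = F u₂ * F v₁ := mul_right_cancel₀ (mul_pos hc₁ hc₂).ne' <| by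
      linear_combination (-(F v₁ * F (u₂ * v₂))) * h₁' + (F u₁ * F (u₂ * v₂)) * h₂'
    have hv : v₁ < v₂ := by
      by_contra! hv
      have := hmono.monotoneOn hv₂ hv₁ hv
      nlinarith [hmono hu₁ hu₂ hlt, hF_pos _ hv₂]
    exact absurd h₁
      (div_lt_div_of_level hF hF_pos hF' hsub hu₁.1 hlt hu₂.2 hv₁.1 hv hv₂.2 hlevel).ne
  · have h := hmono.injOn (mul_mem_Ioo_zero_one hu₁ hv₁) (mul_mem_Ioo_zero_one hu₁ hv₂)
      ((div_left_inj' (hF_pos _ hu₁).ne').1 h₁)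
    exact ⟨rfl, mul_left_cancel₀ hu₁.1.ne' h⟩

end LevelCurve

theorem hasDerivAt_mul_artanh {t : ℝ} (ht : t ∈ Ioo (-1 : ℝ) 1) :
    HasDerivAt (fun s => s * artanh s) (artanh t + t * (1 - t ^ 2)⁻¹) t :=
  ((hasDerivAt_id' t).mul (hasDerivAt_artanh ht)).congr_deriv (by ring)

theorem mul_artanh_div_eq {t : ℝ} (h₀ : 0 < t) (h₁ : t < 1) :
    t * artanh t / (t * (artanh t + t * (1 - t ^ 2)⁻¹)) =
      artanhRatio t / (1 + artanhRatio t) := by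
  have ha := artanh_pos ⟨h₀, h₁⟩
  have hsq : 0 < 1 - t ^ 2 := by nlinarith
  rw [artanhRatio, div_eq_div_iff (by positivity) (by positivity)]
  field_simp
  ring

theorem div_one_add_lt_add {x y z : ℝ} (hx : 0 ≤ x) (hy : 0 ≤ y) (hz : 0 ≤ z) (h : z < x + y) :
    z / (1 + z) < x / (1 + x) + y / (1 + y) := by
  rw [div_add_div _ _ (by positivity) (by positivity), div_lt_div_iff₀ (by positivity)
    (by positivity)]
  nlinarith [mul_nonneg hx hy, mul_nonneg (mul_nonneg hx hy) hz]

theorem mul_artanh_div_lt_add {u v : ℝ} (hu : u ∈ Ioo (0 : ℝ) 1) (hv : v ∈ Ioo (0 : ℝ) 1) :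
    u * v * artanh (u * v) / (u * v * (artanh (u * v) + u * v * (1 - (u * v) ^ 2)⁻¹)) <
      u * artanh u / (u * (artanh u + u * (1 - u ^ 2)⁻¹)) +
        v * artanh v / (v * (artanh v + v * (1 - v ^ 2)⁻¹)) := by
  have huv := mul_mem_Ioo_zero_one hu hv
  rw [mul_artanh_div_eq hu.1 hu.2, mul_artanh_div_eq hv.1 hv.2, mul_artanh_div_eq huv.1 huv.2]
  exact div_one_add_lt_add (artanhRatio_pos hu.1 hu.2).le (artanhRatio_pos hv.1 hv.2).le
    (artanhRatio_pos huv.1 huv.2).le (artanhRatio_mul_lt_add hu.1 hu.2 hv.1 hv.2)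

theorem eq_and_eq_of_mul_artanh_div_eq {u₁ v₁ u₂ v₂ : ℝ} (hu₁ : u₁ ∈ Ioo (0 : ℝ) 1)
    (hv₁ : v₁ ∈ Ioo (0 : ℝ) 1) (hu₂ : u₂ ∈ Ioo (0 : ℝ) 1) (hv₂ : v₂ ∈ Ioo (0 : ℝ) 1)
    (h₁ : u₁ * v₁ * artanh (u₁ * v₁) / (u₁ * artanh u₁) =
      u₂ * v₂ * artanh (u₂ * v₂) / (u₂ * artanh u₂))
    (h₂ : u₁ * v₁ * artanh (u₁ * v₁) / (v₁ * artanh v₁) =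
      u₂ * v₂ * artanh (u₂ * v₂) / (v₂ * artanh v₂)) :
    u₁ = u₂ ∧ v₁ = v₂ := by
  have hF' : ∀ t ∈ Ioo (0 : ℝ) 1, 0 < artanh t + t * (1 - t ^ 2)⁻¹ := fun t ht => by
    have : 0 < 1 - t ^ 2 := by nlinarith [ht.1, ht.2]
    have := artanh_pos ht
    have := ht.1
    positivity
  exact eq_and_eq_of_div_eq_div (F := fun t => t * artanh t)
    (fun t ht => hasDerivAt_mul_artanh ⟨by linarith [ht.1], ht.2⟩)
    (fun t ht => mul_pos ht.1 (artanh_pos ht)) hF' (fun u hu v hv => mul_artanh_div_lt_add hu hv)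
    hu₁ hv₁ hu₂ hv₂ h₁ h₂

theorem binEnt_eq_binEntropy : binEnt = binEntropy := by
  funext p
  simp only [binEnt, binEntropy, log_inv]
  ring

theorem binEntInv_eq_invOn : binEntInv = invOn binEntropy 0 2⁻¹ := by
  rw [← binEnt_eq_binEntropy, ← one_div]
  rfl

theorem binEntInv_mem_and_apply {x : ℝ} (hx : x ∈ Icc 0 (log 2)) :
    binEntInv x ∈ Icc 0 2⁻¹ ∧ binEntropy (binEntInv x) = x := by
  rw [binEntInv_eq_invOn]
  exact invOn_mem_and_apply (by norm_num) binEntropy_strictMonoOn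
    binEntropy_continuous.continuousOn (by simpa using hx)

theorem binEntInv_mem_Ioo {x : ℝ} (hx : x ∈ Ioo 0 (log 2)) : binEntInv x ∈ Ioo 0 2⁻¹ := by
  rw [binEntInv_eq_invOn]
  exact invOn_mem_Ioo (by norm_num) binEntropy_strictMonoOn binEntropy_continuous.continuousOn
    (by simpa using hx)

theorem binEntInv_injOn : InjOn binEntInv (Icc 0 (log 2)) := fun x hx y hy h => by
  rw [← (binEntInv_mem_and_apply hx).2, ← (binEntInv_mem_and_apply hy).2, h]

theorem one_sub_two_mul_binEntInv_mem_Ioo {x : ℝ} (hx : x ∈ Ioo 0 (log 2)) :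
    1 - 2 * binEntInv x ∈ Ioo (0 : ℝ) 1 := by
  have hp := binEntInv_mem_Ioo hx
  constructor <;> linarith [hp.1, hp.2]

theorem log_one_sub_sub_log {p : ℝ} (hp : p ∈ Ioo (0 : ℝ) 1) :
    log (1 - p) - log p = 2 * artanh (1 - 2 * p) := by
  rw [artanh_eq_half_log ⟨by linarith [hp.2], by linarith [hp.1]⟩,
    show (1 + (1 - 2 * p)) / (1 - (1 - 2 * p)) = (1 - p) / p by field_simp [hp.1.ne']; ring,
    log_div (by linarith [hp.2]) hp.1.ne']
  ring

theorem hasDerivAt_binEntInv {x : ℝ} (hx : x ∈ Ioo 0 (log 2)) :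
    HasDerivAt binEntInv (2 * artanh (1 - 2 * binEntInv x))⁻¹ x := by
  have hp := binEntInv_mem_Ioo hx
  have hp₁ : binEntInv x ∈ Ioo (0 : ℝ) 1 := ⟨hp.1, by linarith [hp.2]⟩
  rw [← log_one_sub_sub_log hp₁, binEntInv_eq_invOn] at *
  refine hasDerivAt_invOn (by norm_num) binEntropy_strictMonoOn
    binEntropy_continuous.continuousOn (by simpa using hx)
    (hasDerivAt_binEntropy hp₁.1.ne' hp₁.2.ne) ?_
  rw [log_one_sub_sub_log hp₁]
  exact mul_ne_zero two_ne_zero (artanh_pos ⟨by linarith [hp.2], by linarith [hp.1]⟩).ne'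

theorem one_sub_two_mul_starOp (p q : ℝ) : 1 - 2 * starOp p q = (1 - 2 * p) * (1 - 2 * q) := by
  simp only [starOp]
  ring

theorem f₂_comm (x y : ℝ) : f₂ x y = f₂ y x := by
  simp only [f₂, starOp]
  ring_nf

theorem deriv_f₂_left {x y : ℝ} (hx : x ∈ Ioo 0 (log 2)) (hy : y ∈ Ioo 0 (log 2)) :
    deriv (fun t => f₂ t y) x =
      (1 - 2 * binEntInv x) * (1 - 2 * binEntInv y) *
          artanh ((1 - 2 * binEntInv x) * (1 - 2 * binEntInv y)) /
        ((1 - 2 * binEntInv x) * artanh (1 - 2 * binEntInv x)) := by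
  have hu := one_sub_two_mul_binEntInv_mem_Ioo hx
  have hv := one_sub_two_mul_binEntInv_mem_Ioo hy
  have hr : starOp (binEntInv x) (binEntInv y) ∈ Ioo (0 : ℝ) 1 := by
    have := mul_mem_Ioo_zero_one hu hv
    rw [← one_sub_two_mul_starOp] at this
    constructor <;> linarith [this.1, this.2]
  have hinner : HasDerivAt (fun t => starOp (binEntInv t) (binEntInv y))
      ((1 - 2 * binEntInv y) * (2 * artanh (1 - 2 * binEntInv x))⁻¹) x := by
    simp only [starOp, show ∀ a b : ℝ, a * (1 - b) + b * (1 - a) = (1 - 2 * b) * a + b by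
      intros; ring]
    exact ((hasDerivAt_binEntInv hx).const_mul _).add_const _
  have hf₂ : (fun t => f₂ t y) = binEntropy ∘ fun t => starOp (binEntInv t) (binEntInv y) := by
    funext t
    simp [f₂, binEnt_eq_binEntropy]
  rw [hf₂, ((hasDerivAt_binEntropy hr.1.ne' hr.2.ne).comp x hinner).deriv, log_one_sub_sub_log hr,
    one_sub_two_mul_starOp]
  have := artanh_pos hu
  field_simp [hu.1.ne']

theorem deriv_f₂_right {x y : ℝ} (hx : x ∈ Ioo 0 (log 2)) (hy : y ∈ Ioo 0 (log 2)) :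
    deriv (fun t => f₂ x t) y =
      (1 - 2 * binEntInv x) * (1 - 2 * binEntInv y) *
          artanh ((1 - 2 * binEntInv x) * (1 - 2 * binEntInv y)) /
        ((1 - 2 * binEntInv y) * artanh (1 - 2 * binEntInv y)) := by
  simp_rw [f₂_comm x]
  rw [deriv_f₂_left hy hx, mul_comm (1 - 2 * binEntInv y)]

/-- In the open square `(0, log 2) × (0, log 2)`, the pair of partial derivatives of `f₂`
at a point uniquely determines the point. -/
theorem gradient_determines_point (x₁ y₁ x₂ y₂ : ℝ)
    (hx₁ : x₁ ∈ Set.Ioo (0 : ℝ) (Real.log 2)) (hy₁ : y₁ ∈ Set.Ioo (0 : ℝ) (Real.log 2))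
    (hx₂ : x₂ ∈ Set.Ioo (0 : ℝ) (Real.log 2)) (hy₂ : y₂ ∈ Set.Ioo (0 : ℝ) (Real.log 2))
    (h₁ : deriv (fun t => f₂ t y₁) x₁ = deriv (fun t => f₂ t y₂) x₂)
    (h₂ : deriv (fun t => f₂ x₁ t) y₁ = deriv (fun t => f₂ x₂ t) y₂) :
    x₁ = x₂ ∧ y₁ = y₂ := by
  rw [deriv_f₂_left hx₁ hy₁, deriv_f₂_left hx₂ hy₂] at h₁
  rw [deriv_f₂_right hx₁ hy₁, deriv_f₂_right hx₂ hy₂] at h₂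
  obtain ⟨hu, hv⟩ := eq_and_eq_of_mul_artanh_div_eq (one_sub_two_mul_binEntInv_mem_Ioo hx₁)
    (one_sub_two_mul_binEntInv_mem_Ioo hy₁) (one_sub_two_mul_binEntInv_mem_Ioo hx₂)
    (one_sub_two_mul_binEntInv_mem_Ioo hy₂) h₁ h₂
  exact ⟨binEntInv_injOn (Ioo_subset_Icc_self hx₁) (Ioo_subset_Icc_self hx₂) (by linarith),
    binEntInv_injOn (Ioo_subset_Icc_self hy₁) (Ioo_subset_Icc_self hy₂) (by linarith)⟩
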